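/- arXiv:1904.00519 — 2 statements merged into one kernel-verified Lean document; each statement's English description precedes it below -/
import Mathlib

section
/- Let M : [0,1) → [0,∞) be increasing and continuous with M(0) = 0, let p > 0 and α ≥ 0, and define N(r) = sup_{0 ≤ t ≤ r} M(t)(1−t)^{α/p}. Then, for any integer n ≥ 2, ∫₀¹ (1−r)^{n−2+α} M(r)^p dr < ∞ if and only if ∫₀¹ (1−r)^{n−2} N(r)^p dr < ∞. -/
/-!
Write `N(r)` for the running maximum of `M(t) (1 - t)^(α/p)`. Trivially
`(1 - r)^α M(r)^p ≤ N(r)^p`. Conversely, by continuity `N(r)^p = M(t)^p (1 - t)^α` for some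
`t ≤ r`; as `M` increases and `1 - s` is comparable to `1 - t` on the window `(t, (1 + t)/2)`,
this is at most `2^(α+1) ∫_t^((1+t)/2) (1 - s)^(α-1) M(s)^p ds`. Integrating against
`(1 - r)^(n-2)` and swapping the integrals, a point `s` is only seen from `r > 2s - 1`, an interval
of length `2(1 - s)` on which `(1 - r)^(n-2) ≤ (2(1 - s))^(n-2)`; this restores the weight
`(1 - s)^(n-2+α)` up to a constant.
-/

open MeasureTheory Metric Set
open scoped ENNReal NNReal

noncomputable section

abbrev Eucl (n : ℕ) := EuclideanSpace ℝ (Fin n)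

/-- `f : 𝔹ⁿ → ℝⁿ` is `K`-quasiconformal with a.e. derivative `Df`:
`f` is a homeomorphism of the open unit ball onto its image, differentiable a.e. on the ball
with derivative `Df`, `‖Df‖ⁿ` is locally integrable on the ball, and
`‖Df(x)‖ⁿ ≤ K · J_f(x)` for a.e. `x` in the ball. -/
structure IsQuasiconformal {n : ℕ} (K : ℝ) (f : Eucl n → Eucl n)
    (Df : Eucl n → Eucl n →L[ℝ] Eucl n) : Prop where
  one_le_K : 1 ≤ K
  embedding : Topology.IsEmbedding fun x : (Metric.ball (0 : Eucl n) 1) => f x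
  hasFDerivAt : ∀ᵐ x ∂(volume.restrict (Metric.ball (0 : Eucl n) 1)), HasFDerivAt f (Df x) x
  locInt : LocallyIntegrableOn (fun x => ‖Df x‖ ^ n) (Metric.ball (0 : Eucl n) 1)
  distortion : ∀ᵐ x ∂(volume.restrict (Metric.ball (0 : Eucl n) 1)),
    ‖Df x‖ ^ n ≤ K * (Df x).det

/-- `M(r, f) = sup_{ω ∈ S^{n-1}} |f(rω)|`. -/
def maxMod {n : ℕ} (f : Eucl n → Eucl n) (r : ℝ) : ℝ :=
  ⨆ ω ∈ Metric.sphere (0 : Eucl n) 1, ‖f (r • ω)‖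

/-- The cone `Γ(ω) = ⋃_{0<r<1} B(rω, (1-r)/2)`. -/
def cone {n : ℕ} (ω : Eucl n) : Set (Eucl n) :=
  ⋃ r ∈ Set.Ioo (0 : ℝ) 1, Metric.ball (r • ω) ((1 - r) / 2)

/-- The averaged derivative
`a_f(x) = exp( (1/(n |B_x|)) ∫_{B_x} log J_f(y) dy )`, where `B_x = B(x, (1-|x|)/2)`. -/
def avgDeriv {n : ℕ} (Df : Eucl n → Eucl n →L[ℝ] Eucl n) (x : Eucl n) : ℝ :=
  Real.exp ((∫ y in Metric.ball x ((1 - ‖x‖) / 2), Real.log ((Df y).det)) /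
    (n * (volume (Metric.ball x ((1 - ‖x‖) / 2))).toReal))

theorem IsCompact.exists_isMaxOn_biSup_eq {β : Type*} [TopologicalSpace β] {s : Set β}
    (hs : IsCompact s) (hne : s.Nonempty) {f : β → ℝ} (hf : ContinuousOn f s)
    (hf0 : ∀ x ∈ s, 0 ≤ f x) : ∃ t ∈ s, IsMaxOn f s t ∧ ⨆ x ∈ s, f x = f t := by
  obtain ⟨t, hts, hmax⟩ := hs.exists_isMaxOn hne hf
  refine ⟨t, hts, hmax, ?_⟩
  have hbdd : BddAbove (range fun x : s => f x) :=
    ⟨f t, forall_mem_range.2 fun x => hmax x.2⟩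
  -- Off `s`, the inner supremum of `⨆ x ∈ s, f x` is the junk value `sSup ∅ = 0`.
  have hjunk : sSup ∅ ≤ ⨆ x : s, f x := by
    rw [hmax.iSup_eq hts, Real.sSup_empty]
    exact hf0 t hts
  rw [← ciSup_subtype_fun hbdd hjunk, hmax.iSup_eq hts]

theorem Real.mul_rpow_div_rpow {m x : ℝ} (hm : 0 ≤ m) (hx : 0 ≤ x) {p : ℝ} (hp : p ≠ 0)
    (α : ℝ) : (m * x ^ (α / p)) ^ p = m ^ p * x ^ α := by
  rw [Real.mul_rpow hm (Real.rpow_nonneg hx _), ← Real.rpow_mul hx, div_mul_cancel₀ α hp]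

theorem Real.two_rpow_neg_mul_rpow_sub_one_le {α u v : ℝ} (hα : 0 ≤ α) (hv : 0 < v)
    (hvu : v / 2 ≤ u) (huv : u ≤ v) : 2 ^ (-α) * v ^ (α - 1) ≤ u ^ (α - 1) := by
  have hu : 0 < u := by linarith
  have hhalf : 2 ^ (-α) * v ^ α = (v / 2) ^ α := by
    rw [Real.div_rpow hv.le zero_le_two, Real.rpow_neg zero_le_two, div_eq_inv_mul]
  calc 2 ^ (-α) * v ^ (α - 1) = (v / 2) ^ α / v := by
        rw [Real.rpow_sub_one hv.ne', ← hhalf, mul_div_assoc]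
    _ ≤ u ^ α / u := by
        gcongr
    _ = u ^ (α - 1) := (Real.rpow_sub_one hu.ne' α).symm

theorem lintegral_Ioo_one_sub_rpow_le {q s : ℝ} (hq : 0 ≤ q) (hs : s < 1) :
    ∫⁻ r in Ioo (2 * s - 1) 1, ENNReal.ofReal ((1 - r) ^ q) ≤
      ENNReal.ofReal (2 ^ (q + 1) * (1 - s) ^ (q + 1)) := by
  have h1s : 0 < 1 - s := by linarith
  calc _ ≤ ∫⁻ r in Ioo (2 * s - 1) 1, ENNReal.ofReal ((2 * (1 - s)) ^ q) :=
        setLIntegral_mono' measurableSet_Ioo fun r hr => ENNReal.ofReal_le_ofReal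
          (Real.rpow_le_rpow (by linarith [hr.2]) (by linarith [hr.1]) hq)
    _ = _ := by
        rw [setLIntegral_const, Real.volume_Ioo, ← ENNReal.ofReal_mul (by positivity),
          show 1 - (2 * s - 1) = 2 * (1 - s) by ring, ← Real.rpow_add_one (by positivity),
          Real.mul_rpow zero_le_two h1s.le]

theorem lintegral_rpow_mul_lintegral_Ioo_half_le {g : ℝ → ℝ≥0∞}
    (hg : AEMeasurable g (volume.restrict (Ioo 0 1))) {q : ℝ} (hq : 0 ≤ q) :
    ∫⁻ r in Ioo (0 : ℝ) 1, ENNReal.ofReal ((1 - r) ^ q) * ∫⁻ s in Ioo 0 ((1 + r) / 2), g s ≤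
      ENNReal.ofReal (2 ^ (q + 1)) *
        ∫⁻ s in Ioo (0 : ℝ) 1, ENNReal.ofReal ((1 - s) ^ (q + 1)) * g s := by
  set S : Set (ℝ × ℝ) := {z | z.2 < (1 + z.1) / 2}
  set w : ℝ × ℝ → ℝ≥0∞ := fun z => ENNReal.ofReal ((1 - z.1) ^ q)
  set F : ℝ × ℝ → ℝ≥0∞ := fun z => S.indicator w z * g z.2
  have hS : MeasurableSet S := measurableSet_lt (by fun_prop) (by fun_prop)
  have hw : Measurable w := by fun_prop
  have hF : AEMeasurable F ((volume.restrict (Ioo 0 1)).prod (volume.restrict (Ioo 0 1))) :=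
    (hw.indicator hS).aemeasurable.mul hg.comp_snd
  have hinner : ∀ r ∈ Ioo (0 : ℝ) 1, ENNReal.ofReal ((1 - r) ^ q) *
      ∫⁻ s in Ioo 0 ((1 + r) / 2), g s = ∫⁻ s in Ioo 0 1, F (r, s) := by
    intro r hr
    have hslice : Iio ((1 + r) / 2) ∩ Ioo 0 1 = Ioo 0 ((1 + r) / 2) := by
      ext s
      simp only [mem_inter_iff, mem_Iio, mem_Ioo]
      exact ⟨fun ⟨h, h0, _⟩ => ⟨h0, h⟩, fun ⟨h0, h⟩ => ⟨h, h0, by linarith [hr.2]⟩⟩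
    have hF_slice : ∀ s, F (r, s) =
        (Iio ((1 + r) / 2)).indicator (fun s => ENNReal.ofReal ((1 - r) ^ q) * g s) s := by
      intro s
      simp only [F, S, w, indicator_apply, mem_ofPred_eq, mem_Iio, ite_mul, zero_mul]
    simp only [hF_slice]
    rw [setLIntegral_indicator measurableSet_Iio, hslice,
      lintegral_const_mul' _ _ ENNReal.ofReal_ne_top]
  have houter : ∀ s ∈ Ioo (0 : ℝ) 1, ∫⁻ r in Ioo 0 1, F (r, s) ≤
      ENNReal.ofReal (2 ^ (q + 1)) * (ENNReal.ofReal ((1 - s) ^ (q + 1)) * g s) := by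
    intro s hs
    have hF_slice : ∀ r, F (r, s) =
        (Ioi (2 * s - 1)).indicator (fun r => ENNReal.ofReal ((1 - r) ^ q)) r * g s := by
      intro r
      have hrs : s < (1 + r) / 2 ↔ 2 * s - 1 < r := by constructor <;> intro h <;> linarith
      simp only [F, S, w, indicator_apply, mem_ofPred_eq, mem_Ioi, hrs]
    calc ∫⁻ r in Ioo 0 1, F (r, s)
        = (∫⁻ r in Ioi (2 * s - 1) ∩ Ioo 0 1, ENNReal.ofReal ((1 - r) ^ q)) * g s := by
          simp only [hF_slice]
          rw [lintegral_mul_const _ ((by fun_prop : Measurable _).indicator measurableSet_Ioi),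
            setLIntegral_indicator measurableSet_Ioi]
      _ ≤ (∫⁻ r in Ioo (2 * s - 1) 1, ENNReal.ofReal ((1 - r) ^ q)) * g s := by
          gcongr
          exact fun r hr => ⟨hr.1, hr.2.2⟩
      _ ≤ ENNReal.ofReal (2 ^ (q + 1) * (1 - s) ^ (q + 1)) * g s := by
          gcongr
          exact lintegral_Ioo_one_sub_rpow_le hq hs.2
      _ = _ := by rw [ENNReal.ofReal_mul (by positivity), mul_assoc]
  calc ∫⁻ r in Ioo (0 : ℝ) 1, ENNReal.ofReal ((1 - r) ^ q) * ∫⁻ s in Ioo 0 ((1 + r) / 2), g s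
      = ∫⁻ r in Ioo (0 : ℝ) 1, ∫⁻ s in Ioo 0 1, F (r, s) :=
        setLIntegral_congr_fun measurableSet_Ioo hinner
    _ = ∫⁻ s in Ioo (0 : ℝ) 1, ∫⁻ r in Ioo 0 1, F (r, s) := lintegral_lintegral_swap hF
    _ ≤ ∫⁻ s in Ioo (0 : ℝ) 1,
          ENNReal.ofReal (2 ^ (q + 1)) * (ENNReal.ofReal ((1 - s) ^ (q + 1)) * g s) :=
        setLIntegral_mono' measurableSet_Ioo houter
    _ = _ := lintegral_const_mul' _ _ ENNReal.ofReal_ne_top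

section WeightedMaximum

variable {M : ℝ → ℝ} {p α : ℝ}

theorem ofReal_rpow_mul_rpow_le_lintegral_Ioo_half (hp : 0 < p) (hα : 0 ≤ α)
    (hMnonneg : ∀ t ∈ Ico (0 : ℝ) 1, 0 ≤ M t) (hMmono : MonotoneOn M (Ico (0 : ℝ) 1))
    {t : ℝ} (ht : t ∈ Ico (0 : ℝ) 1) :
    ENNReal.ofReal (M t ^ p * (1 - t) ^ α) ≤ ENNReal.ofReal (2 ^ (α + 1)) *
      ∫⁻ s in Ioo t ((1 + t) / 2), ENNReal.ofReal ((1 - s) ^ (α - 1) * M s ^ p) := by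
  have h1t : 0 < 1 - t := by linarith [ht.2]
  have hMt : 0 ≤ M t ^ p := Real.rpow_nonneg (hMnonneg t ht) p
  have hconst : M t ^ p * (1 - t) ^ α =
      2 ^ (α + 1) * (2 ^ (-α) * (1 - t) ^ (α - 1) * M t ^ p * ((1 + t) / 2 - t)) := by
    have h2 : (2 : ℝ) ^ (α + 1) * 2 ^ (-α) = 2 := by
      rw [← Real.rpow_add zero_lt_two]; norm_num
    have h1 : (1 - t) ^ (α - 1) * (1 - t) = (1 - t) ^ α := by
      rw [← Real.rpow_add_one h1t.ne']; ring_nf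
    linear_combination -(M t ^ p * (1 - t) ^ (α - 1) * (1 - t) / 2) * h2 - M t ^ p * h1
  calc ENNReal.ofReal (M t ^ p * (1 - t) ^ α)
      = ENNReal.ofReal (2 ^ (α + 1)) * (ENNReal.ofReal (2 ^ (-α) * (1 - t) ^ (α - 1) * M t ^ p) *
          volume (Ioo t ((1 + t) / 2))) := by
        rw [Real.volume_Ioo, ← ENNReal.ofReal_mul (by positivity),
          ← ENNReal.ofReal_mul (by positivity), hconst]
    _ ≤ _ := by
        rw [← setLIntegral_const]
        gcongr _ * ?_
        refine setLIntegral_mono' measurableSet_Ioo fun s hs => ENNReal.ofReal_le_ofReal ?_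
        have hs1 : s ∈ Ico (0 : ℝ) 1 := ⟨ht.1.trans hs.1.le, by linarith [hs.2]⟩
        have hs2 : (1 - t) / 2 ≤ 1 - s := by linarith [hs.2]
        exact mul_le_mul
          (Real.two_rpow_neg_mul_rpow_sub_one_le hα h1t hs2 (by linarith [hs.1]))
          (Real.rpow_le_rpow (hMnonneg t ht) (hMmono ht hs1 hs.1.le) hp.le) hMt
          (Real.rpow_nonneg (by linarith) _)

theorem exists_isMaxOn_biSup_Icc_eq (hMnonneg : ∀ t ∈ Ico (0 : ℝ) 1, 0 ≤ M t)
    (hMcont : ContinuousOn M (Ico (0 : ℝ) 1)) {r : ℝ} (hr : r ∈ Ico (0 : ℝ) 1) :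
    ∃ t ∈ Icc 0 r, IsMaxOn (fun t => M t * (1 - t) ^ (α / p)) (Icc 0 r) t ∧
      ⨆ t ∈ Icc 0 r, M t * (1 - t) ^ (α / p) = M t * (1 - t) ^ (α / p) := by
  have hsub : Icc 0 r ⊆ Ico (0 : ℝ) 1 := Icc_subset_Ico_right hr.2
  refine isCompact_Icc.exists_isMaxOn_biSup_eq (nonempty_Icc.2 hr.1) ?_ fun t ht => ?_
  · refine (hMcont.mono hsub).mul ((continuousOn_const.sub continuousOn_id).rpow_const ?_)
    exact fun t ht => Or.inl (sub_ne_zero.2 (hsub ht).2.ne')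
  · exact mul_nonneg (hMnonneg t (hsub ht)) (Real.rpow_nonneg (by linarith [(hsub ht).2]) _)

theorem rpow_add_mul_rpow_le_rpow_mul_biSup (hp : 0 < p)
    (hMnonneg : ∀ t ∈ Ico (0 : ℝ) 1, 0 ≤ M t) (hMcont : ContinuousOn M (Ico (0 : ℝ) 1))
    {r : ℝ} (hr : r ∈ Ico (0 : ℝ) 1) (q : ℝ) :
    (1 - r) ^ (q + α) * M r ^ p ≤
      (1 - r) ^ q * (⨆ t ∈ Icc 0 r, M t * (1 - t) ^ (α / p)) ^ p := by
  obtain ⟨t, ht, hmax, hsup⟩ := exists_isMaxOn_biSup_Icc_eq (α := α) (p := p) hMnonneg hMcont hr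
  have h1r : 0 < 1 - r := by linarith [hr.2]
  rw [hsup, Real.rpow_add h1r, mul_assoc, mul_comm ((1 - r) ^ α),
    ← Real.mul_rpow_div_rpow (hMnonneg r hr) h1r.le hp.ne']
  exact mul_le_mul_of_nonneg_left (Real.rpow_le_rpow
    (mul_nonneg (hMnonneg r hr) (Real.rpow_nonneg h1r.le _)) (hmax ⟨hr.1, le_rfl⟩) hp.le)
    (Real.rpow_nonneg h1r.le _)

theorem ofReal_rpow_mul_biSup_rpow_le (hp : 0 < p) (hα : 0 ≤ α)
    (hMnonneg : ∀ t ∈ Ico (0 : ℝ) 1, 0 ≤ M t) (hMmono : MonotoneOn M (Ico (0 : ℝ) 1))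
    (hMcont : ContinuousOn M (Ico (0 : ℝ) 1)) {r : ℝ} (hr : r ∈ Ico (0 : ℝ) 1) (q : ℝ) :
    ENNReal.ofReal ((1 - r) ^ q * (⨆ t ∈ Icc 0 r, M t * (1 - t) ^ (α / p)) ^ p) ≤
      ENNReal.ofReal (2 ^ (α + 1)) * (ENNReal.ofReal ((1 - r) ^ q) *
        ∫⁻ s in Ioo 0 ((1 + r) / 2), ENNReal.ofReal ((1 - s) ^ (α - 1) * M s ^ p)) := by
  obtain ⟨t, ht, -, hsup⟩ := exists_isMaxOn_biSup_Icc_eq (α := α) (p := p) hMnonneg hMcont hr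
  have ht' : t ∈ Ico (0 : ℝ) 1 := ⟨ht.1, ht.2.trans_lt hr.2⟩
  have hwindow : Ioo t ((1 + t) / 2) ⊆ Ioo 0 ((1 + r) / 2) :=
    Ioo_subset_Ioo ht.1 (by linarith [ht.2])
  rw [hsup, Real.mul_rpow_div_rpow (hMnonneg t ht') (by linarith [ht'.2]) hp.ne',
    ENNReal.ofReal_mul (Real.rpow_nonneg (by linarith [hr.2]) _), mul_left_comm]
  gcongr
  exact (ofReal_rpow_mul_rpow_le_lintegral_Ioo_half hp hα hMnonneg hMmono ht').trans
    (by gcongr)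

theorem lintegral_rpow_mul_biSup_rpow_le (hp : 0 < p) (hα : 0 ≤ α)
    (hMnonneg : ∀ t ∈ Ico (0 : ℝ) 1, 0 ≤ M t) (hMmono : MonotoneOn M (Ico (0 : ℝ) 1))
    (hMcont : ContinuousOn M (Ico (0 : ℝ) 1)) {q : ℝ} (hq : 0 ≤ q) :
    ∫⁻ r in Ioo (0 : ℝ) 1,
        ENNReal.ofReal ((1 - r) ^ q * (⨆ t ∈ Icc 0 r, M t * (1 - t) ^ (α / p)) ^ p) ≤
      ENNReal.ofReal (2 ^ (α + 1)) * (ENNReal.ofReal (2 ^ (q + 1)) *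
        ∫⁻ s in Ioo (0 : ℝ) 1, ENNReal.ofReal ((1 - s) ^ (q + α) * M s ^ p)) := by
  set g : ℝ → ℝ≥0∞ := fun s => ENNReal.ofReal ((1 - s) ^ (α - 1) * M s ^ p)
  have hg : AEMeasurable g (volume.restrict (Ioo 0 1)) := by
    refine ContinuousOn.aemeasurable ?_ measurableSet_Ioo
    refine ENNReal.continuous_ofReal.comp_continuousOn ((continuousOn_const.sub
      continuousOn_id).rpow_const (fun s hs => Or.inl (sub_ne_zero.2 hs.2.ne')) |>.mul ?_)
    exact (hMcont.mono Ioo_subset_Ico_self).rpow_const fun _ _ => Or.inr hp.le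
  have hweight : ∀ s ∈ Ioo (0 : ℝ) 1, ENNReal.ofReal ((1 - s) ^ (q + 1)) * g s =
      ENNReal.ofReal ((1 - s) ^ (q + α) * M s ^ p) := by
    intro s hs
    have h1s : 0 < 1 - s := by linarith [hs.2]
    rw [← ENNReal.ofReal_mul (Real.rpow_nonneg h1s.le _), ← mul_assoc, ← Real.rpow_add h1s]
    ring_nf
  calc _ ≤ ∫⁻ r in Ioo (0 : ℝ) 1, ENNReal.ofReal (2 ^ (α + 1)) *
          (ENNReal.ofReal ((1 - r) ^ q) * ∫⁻ s in Ioo 0 ((1 + r) / 2), g s) :=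
        setLIntegral_mono' measurableSet_Ioo fun r hr => ofReal_rpow_mul_biSup_rpow_le hp hα
          hMnonneg hMmono hMcont (Ioo_subset_Ico_self hr) q
    _ ≤ ENNReal.ofReal (2 ^ (α + 1)) * (ENNReal.ofReal (2 ^ (q + 1)) *
          ∫⁻ s in Ioo (0 : ℝ) 1, ENNReal.ofReal ((1 - s) ^ (q + 1)) * g s) := by
        rw [lintegral_const_mul' _ _ ENNReal.ofReal_ne_top]
        gcongr
        exact lintegral_rpow_mul_lintegral_Ioo_half_le hg hq
    _ = _ := by rw [setLIntegral_congr_fun measurableSet_Ioo hweight]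

end WeightedMaximum

theorem stmt8_general {n : ℕ} (hn : 2 ≤ n) (M : ℝ → ℝ) (p α : ℝ) (hp : 0 < p) (hα : 0 ≤ α)
    (hMnonneg : ∀ t ∈ Set.Ico (0 : ℝ) 1, 0 ≤ M t)
    (hMmono : MonotoneOn M (Set.Ico (0 : ℝ) 1))
    (hMcont : ContinuousOn M (Set.Ico (0 : ℝ) 1)) :
    (∫⁻ r in Set.Ioo (0 : ℝ) 1,
        ENNReal.ofReal ((1 - r) ^ ((n : ℝ) - 2 + α) * M r ^ p) < ⊤) ↔
    (∫⁻ r in Set.Ioo (0 : ℝ) 1,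
        ENNReal.ofReal ((1 - r) ^ ((n : ℝ) - 2) *
          (⨆ t ∈ Set.Icc (0 : ℝ) r, M t * (1 - t) ^ (α / p)) ^ p) < ⊤) := by
  have hq : (0 : ℝ) ≤ n - 2 := by
    rw [sub_nonneg]; exact_mod_cast hn
  constructor
  · exact fun hM => (lintegral_rpow_mul_biSup_rpow_le hp hα hMnonneg hMmono hMcont hq).trans_lt
      (ENNReal.mul_lt_top ENNReal.ofReal_lt_top (ENNReal.mul_lt_top ENNReal.ofReal_lt_top hM))
  · refine fun hN => lt_of_le_of_lt (setLIntegral_mono' measurableSet_Ioo fun r hr => ?_) hN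
    exact ENNReal.ofReal_le_ofReal
      (rpow_add_mul_rpow_le_rpow_mul_biSup hp hMnonneg hMcont (Ioo_subset_Ico_self hr) _)

theorem stmt8 {n : ℕ} (hn : 2 ≤ n) (M : ℝ → ℝ) (p α : ℝ) (hp : 0 < p) (hα : 0 ≤ α)
    (hM0 : M 0 = 0) (hMnonneg : ∀ t ∈ Set.Ico (0 : ℝ) 1, 0 ≤ M t)
    (hMmono : MonotoneOn M (Set.Ico (0 : ℝ) 1))
    (hMcont : ContinuousOn M (Set.Ico (0 : ℝ) 1)) :
    (∫⁻ r in Set.Ioo (0 : ℝ) 1,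
        ENNReal.ofReal ((1 - r) ^ ((n : ℝ) - 2 + α) * M r ^ p) < ⊤) ↔
    (∫⁻ r in Set.Ioo (0 : ℝ) 1,
        ENNReal.ofReal ((1 - r) ^ ((n : ℝ) - 2) *
          (⨆ t ∈ Set.Icc (0 : ℝ) r, M t * (1 - t) ^ (α / p)) ^ p) < ⊤) :=
  stmt8_general hn M p α hp hα hMnonneg hMmono hMcont
end
end

section
/- Let f : 𝔹ⁿ → ℝⁿ (n ≥ 2) be a K-quasiconformal mapping with f(0) = 0 and let 0 < p ≤ n. Then there exists a constant C depending only on n, K, p such that for every 0 < r < 1, ∫_{B(0,r)} |f(x)|^{p−n} ‖Df(x)‖ⁿ dx ≤ C ( ∫_{B(0,r)} ‖Df(x)‖ⁿ dx )^{p/n}. -/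
/-!
Since `‖Df‖ⁿ ≤ K J_f`, the change of variables `y = f x` bounds the left-hand side by
`K ∫_{f(B(0,r))} |y|^{p-n} dy`. For a set `A` and `R > 0`, the weight `|y|^{p-n}` is at most
`R^{p-n}` off `B(0,R)` because `p ≤ n`, and by scaling its integral over `B(0,R)` is `R^p` times
its integral over the unit ball, which is finite because `p > 0`. Taking `R^n = |A|` gives
`∫_A |y|^{p-n} dy ≤ C |A|^{p/n}`, and `|f(B(0,r))| ≤ ∫_{B(0,r)} J_f ≤ ∫_{B(0,r)} ‖Df‖ⁿ`.
-/
open MeasureTheory Metric Set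
open scoped ENNReal NNReal

noncomputable section

open Module

theorem ContinuousLinearMap.abs_det_le_opNorm_pow {E : Type*} [NormedAddCommGroup E]
    [NormedSpace ℝ E] [FiniteDimensional ℝ E] (A : E →L[ℝ] E) :
    |A.det| ≤ ‖A‖ ^ finrank ℝ E := by
  borelize E
  set μ : Measure E := Measure.addHaar
  have h_image : A '' ball 0 1 ⊆ closedBall 0 ‖A‖ := by
    rintro _ ⟨x, hx, rfl⟩
    rw [mem_closedBall_zero_iff]
    simpa using A.le_opNorm_of_le (mem_ball_zero_iff.1 hx).le
  have h_vol : ENNReal.ofReal |A.det| * μ (ball 0 1) ≤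
      ENNReal.ofReal (‖A‖ ^ finrank ℝ E) * μ (ball 0 1) := by
    rw [← μ.addHaar_image_continuousLinearMap, ← μ.addHaar_closedBall 0 (norm_nonneg A)]
    exact measure_mono h_image
  rwa [ENNReal.mul_le_mul_iff_left (measure_ball_pos μ 0 one_pos).ne' measure_ball_lt_top.ne,
    ENNReal.ofReal_le_ofReal_iff (by positivity)] at h_vol

namespace MeasureTheory

theorem exists_measurableSet_subset_ae_eq_forall_mem {α : Type*}
    [MeasurableSpace α] {μ : Measure α} {t : Set α} {P : α → Prop} (ht : MeasurableSet t)
    (h : ∀ᵐ x ∂μ.restrict t, P x) :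
    ∃ s ⊆ t, MeasurableSet s ∧ s =ᵐ[μ] t ∧ ∀ x ∈ s, P x := by
  set N := toMeasurable (μ.restrict t) {x | ¬P x}
  have hN : μ (N ∩ t) = 0 := by
    rw [← Measure.restrict_apply (measurableSet_toMeasurable _ _), measure_toMeasurable]
    exact ae_iff.1 h
  refine ⟨t \ (N ∩ t), sdiff_subset, ht.diff ((measurableSet_toMeasurable _ _).inter ht),
    sdiff_null_ae_eq_self hN, fun x hx => ?_⟩
  by_contra hPx
  exact hx.2 ⟨subset_toMeasurable _ _ hPx, hx.1⟩

theorem setLIntegral_norm_rpow_le_ball_add {E : Type*} [NormedAddCommGroup E]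
    [MeasurableSpace E] [OpensMeasurableSpace E] (μ : Measure E) {s R : ℝ} (hs : s ≤ 0)
    (hR : 0 < R) (A : Set E) :
    ∫⁻ y in A, ENNReal.ofReal (‖y‖ ^ s) ∂μ ≤
      ∫⁻ y in ball 0 R, ENNReal.ofReal (‖y‖ ^ s) ∂μ + ENNReal.ofReal (R ^ s) * μ A := by
  set g : E → ℝ≥0∞ := fun y => ENNReal.ofReal (‖y‖ ^ s)
  have h_pointwise : ∀ y, g y ≤ (ball 0 R).indicator g y + ENNReal.ofReal (R ^ s) := by
    intro y
    by_cases hy : y ∈ ball 0 R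
    · simp [indicator_of_mem hy]
    · rw [indicator_of_notMem hy, zero_add]
      exact ENNReal.ofReal_le_ofReal <| Real.rpow_le_rpow_of_nonpos hR (by simpa using hy) hs
  calc ∫⁻ y in A, g y ∂μ
      ≤ ∫⁻ y in A, ((ball 0 R).indicator g y + ENNReal.ofReal (R ^ s)) ∂μ :=
        lintegral_mono h_pointwise
    _ = ∫⁻ y in ball 0 R, g y ∂μ.restrict A + ENNReal.ofReal (R ^ s) * μ A := by
        rw [lintegral_add_right _ measurable_const, setLIntegral_const,
          lintegral_indicator measurableSet_ball]
    _ ≤ ∫⁻ y in ball 0 R, g y ∂μ + ENNReal.ofReal (R ^ s) * μ A := by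
        gcongr
        exact Measure.restrict_le_self

section AddHaar

variable {E : Type*} [NormedAddCommGroup E] [NormedSpace ℝ E] [FiniteDimensional ℝ E]
  [MeasurableSpace E] [BorelSpace E] (μ : Measure E) [μ.IsAddHaarMeasure]

theorem setLIntegral_ball_norm_rpow {s R : ℝ} (hR : 0 < R) :
    ∫⁻ y in ball 0 R, ENNReal.ofReal (‖y‖ ^ s) ∂μ =
      ENNReal.ofReal (R ^ (s + finrank ℝ E)) * ∫⁻ y in ball 0 1, ENNReal.ofReal (‖y‖ ^ s) ∂μ := by
  have h_preimage : (R • ·) ⁻¹' ball (0 : E) R = ball 0 1 := by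
    ext z
    simp [norm_smul, abs_of_pos hR, hR]
  have h_map : μ = ENNReal.ofReal (R ^ finrank ℝ E) • Measure.map (R • ·) μ := by
    rw [μ.map_addHaar_smul hR.ne', smul_smul, ← ENNReal.ofReal_mul (by positivity),
      abs_of_pos (by positivity), mul_inv_cancel₀ (by positivity), ENNReal.ofReal_one, one_smul]
  conv_lhs => rw [h_map]
  rw [Measure.restrict_smul, lintegral_smul_measure, setLIntegral_map measurableSet_ball
    (by fun_prop) (measurable_const_smul R), h_preimage, smul_eq_mul,
    ← lintegral_const_mul' _ _ ENNReal.ofReal_ne_top,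
    ← lintegral_const_mul' _ _ ENNReal.ofReal_ne_top]
  refine setLIntegral_congr_fun measurableSet_ball fun y _ => ?_
  rw [← ENNReal.ofReal_mul (by positivity), ← ENNReal.ofReal_mul (by positivity), norm_smul,
    Real.norm_of_nonneg hR.le, Real.mul_rpow hR.le (norm_nonneg y), Real.rpow_add hR,
    Real.rpow_natCast]
  ring_nf

theorem setLIntegral_unitBall_norm_rpow_lt_top (hd : 1 ≤ finrank ℝ E) {s : ℝ}
    (hs : -(finrank ℝ E : ℝ) < s) :
    ∫⁻ y in ball (0 : E) 1, ENNReal.ofReal (‖y‖ ^ s) ∂μ < ∞ :=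
  IntegrableOn.setLIntegral_lt_top <|
    integrableOn_ball_of_norm_le_rpow (C := 1) (α := -s) hd (by linarith)
      (.of_forall fun y => by simp [Real.norm_of_nonneg (Real.rpow_nonneg (norm_nonneg y) s)])
      (continuous_norm.measurable.pow_const s).aestronglyMeasurable

theorem setLIntegral_norm_rpow_le_measure_rpow {p : ℝ} (hp : 0 < p)
    (hpd : p ≤ finrank ℝ E) (A : Set E) :
    ∫⁻ y in A, ENNReal.ofReal (‖y‖ ^ (p - finrank ℝ E)) ∂μ ≤
      (∫⁻ y in ball 0 1, ENNReal.ofReal (‖y‖ ^ (p - finrank ℝ E)) ∂μ + 1) *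
        μ A ^ (p / finrank ℝ E) := by
  set d : ℝ := (finrank ℝ E : ℝ)
  have hd : 0 < d := hp.trans_le hpd
  rcases eq_or_ne (μ A) 0 with hA0 | hA0
  · simp [Measure.restrict_eq_zero.2 hA0]
  rcases eq_or_ne (μ A) ∞ with hAtop | hAtop
  · simp [hAtop, ENNReal.top_rpow_of_pos (div_pos hp hd)]
  set R : ℝ := (μ A).toReal ^ d⁻¹
  have hR : 0 < R := Real.rpow_pos_of_pos (ENNReal.toReal_pos hA0 hAtop) _
  have hRd : R ^ d = (μ A).toReal := by
    rw [← Real.rpow_mul ENNReal.toReal_nonneg, inv_mul_cancel₀ hd.ne', Real.rpow_one]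
  have hRp : ENNReal.ofReal (R ^ p) = μ A ^ (p / d) := by
    rw [← ENNReal.ofReal_toReal hAtop, ENNReal.ofReal_rpow_of_nonneg ENNReal.toReal_nonneg
      (div_pos hp hd).le, ← Real.rpow_mul ENNReal.toReal_nonneg, inv_mul_eq_div]
  have hRA : ENNReal.ofReal (R ^ (p - d)) * μ A = ENNReal.ofReal (R ^ p) := by
    rw [← ENNReal.ofReal_toReal hAtop, ← hRd, ← ENNReal.ofReal_mul (by positivity),
      ← Real.rpow_add hR, sub_add_cancel]
  calc ∫⁻ y in A, ENNReal.ofReal (‖y‖ ^ (p - d)) ∂μ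
      ≤ ∫⁻ y in ball 0 R, ENNReal.ofReal (‖y‖ ^ (p - d)) ∂μ +
          ENNReal.ofReal (R ^ (p - d)) * μ A :=
        setLIntegral_norm_rpow_le_ball_add μ (by linarith) hR A
    _ = (∫⁻ y in ball 0 1, ENNReal.ofReal (‖y‖ ^ (p - d)) ∂μ + 1) * μ A ^ (p / d) := by
        rw [setLIntegral_ball_norm_rpow μ hR, sub_add_cancel, hRA, hRp]
        ring

variable {f : E → E} {f' : E → E →L[ℝ] E} {s : Set E}

theorem addHaar_image_le_lintegral_opNorm_pow (hs : MeasurableSet s)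
    (hf' : ∀ x ∈ s, HasFDerivWithinAt f (f' x) s x) :
    μ (f '' s) ≤ ∫⁻ x in s, ENNReal.ofReal (‖f' x‖ ^ finrank ℝ E) ∂μ :=
  (addHaar_image_le_lintegral_abs_det_fderiv μ hs hf').trans <|
    lintegral_mono fun x => ENNReal.ofReal_le_ofReal (f' x).abs_det_le_opNorm_pow

theorem lintegral_opNorm_pow_mul_comp_le (hs : MeasurableSet s)
    (hf' : ∀ x ∈ s, HasFDerivWithinAt f (f' x) s x) (hf : InjOn f s) {K : ℝ} (hK : 0 ≤ K)
    (h_dist : ∀ x ∈ s, ‖f' x‖ ^ finrank ℝ E ≤ K * (f' x).det) (g : E → ℝ≥0∞) :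
    ∫⁻ x in s, ENNReal.ofReal (‖f' x‖ ^ finrank ℝ E) * g (f x) ∂μ ≤
      ENNReal.ofReal K * ∫⁻ y in f '' s, g y ∂μ := by
  rw [lintegral_image_eq_lintegral_abs_det_fderiv_mul μ hs hf' hf,
    ← lintegral_const_mul' _ _ ENNReal.ofReal_ne_top]
  refine setLIntegral_mono' hs fun x hx => ?_
  rw [← mul_assoc, ← ENNReal.ofReal_mul hK]
  gcongr
  exact (h_dist x hx).trans (mul_le_mul_of_nonneg_left (le_abs_self _) hK)

end AddHaar

end MeasureTheory

theorem stmt13_general {n : ℕ} (K p : ℝ) (hK : 1 ≤ K) (hp : 0 < p)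
    (hpn : p ≤ (n : ℝ)) :
    ∃ C : ℝ, 0 < C ∧
      ∀ (f : Eucl n → Eucl n) (Df : Eucl n → Eucl n →L[ℝ] Eucl n),
        IsQuasiconformal K f Df → f 0 = 0 →
        ∀ r : ℝ, 0 < r → r < 1 →
          (∫⁻ x in Metric.ball (0 : Eucl n) r,
              ENNReal.ofReal (‖f x‖ ^ (p - n) * ‖Df x‖ ^ n)) ≤
            ENNReal.ofReal C *
              (∫⁻ x in Metric.ball (0 : Eucl n) r,
                ENNReal.ofReal (‖Df x‖ ^ n)) ^ (p / (n : ℝ)) := by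
  have hn : 1 ≤ n := Nat.cast_pos.1 (hp.trans_le hpn)
  set c : ℝ≥0∞ := (∫⁻ y in ball (0 : Eucl n) 1, ENNReal.ofReal (‖y‖ ^ (p - n))) + 1
  have h_unitBall := setLIntegral_unitBall_norm_rpow_lt_top (E := Eucl n) (s := p - n) volume
    (by simpa using hn) (by simpa using hp)
  have hc : c ≠ ∞ := ENNReal.add_ne_top.2 ⟨h_unitBall.ne, ENNReal.one_ne_top⟩
  have hc₀ : c ≠ 0 := by simp [c]
  refine ⟨K * c.toReal, mul_pos (by linarith) (ENNReal.toReal_pos hc₀ hc), ?_⟩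
  intro f Df hf _ r _ hr1
  have h_sub : ball (0 : Eucl n) r ⊆ ball 0 1 := ball_subset_ball hr1.le
  obtain ⟨s, hsr, hs, hs_ae, hs_good⟩ := exists_measurableSet_subset_ae_eq_forall_mem
    measurableSet_ball (ae_restrict_of_ae_restrict_of_subset h_sub
      (hf.hasFDerivAt.and hf.distortion))
  have hf' : ∀ x ∈ s, HasFDerivWithinAt f (Df x) s x :=
    fun x hx => (hs_good x hx).1.hasFDerivWithinAt
  have h_inj : InjOn f s := (injOn_iff_injective.2 hf.embedding.injective).mono (hsr.trans h_sub)
  have h_image := addHaar_image_le_lintegral_opNorm_pow volume hs hf'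
  have h_comp := lintegral_opNorm_pow_mul_comp_le volume hs hf' h_inj (K := K) (by linarith)
    (fun x hx => by simpa using (hs_good x hx).2) fun y => ENNReal.ofReal (‖y‖ ^ (p - n))
  have h_weight := setLIntegral_norm_rpow_le_measure_rpow volume hp (by simpa using hpn) (f '' s)
  simp only [finrank_euclideanSpace_fin] at h_image h_comp h_weight
  rw [ENNReal.ofReal_mul (by linarith), ENNReal.ofReal_toReal hc, ← setLIntegral_congr hs_ae,
    ← setLIntegral_congr hs_ae]
  calc ∫⁻ x in s, ENNReal.ofReal (‖f x‖ ^ (p - n) * ‖Df x‖ ^ n)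
      = ∫⁻ x in s, ENNReal.ofReal (‖Df x‖ ^ n) * ENNReal.ofReal (‖f x‖ ^ (p - n)) := by
        refine lintegral_congr fun x => ?_
        rw [mul_comm (‖f x‖ ^ _), ENNReal.ofReal_mul (by positivity)]
    _ ≤ ENNReal.ofReal K * (c * volume (f '' s) ^ (p / n)) := h_comp.trans (by gcongr)
    _ ≤ ENNReal.ofReal K * c * (∫⁻ x in s, ENNReal.ofReal (‖Df x‖ ^ n)) ^ (p / n) := by
        rw [mul_assoc]
        gcongr

theorem stmt13 {n : ℕ} (hn : 2 ≤ n) (K p : ℝ) (hK : 1 ≤ K) (hp : 0 < p)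
    (hpn : p ≤ (n : ℝ)) :
    ∃ C : ℝ, 0 < C ∧
      ∀ (f : Eucl n → Eucl n) (Df : Eucl n → Eucl n →L[ℝ] Eucl n),
        IsQuasiconformal K f Df → f 0 = 0 →
        ∀ r : ℝ, 0 < r → r < 1 →
          (∫⁻ x in Metric.ball (0 : Eucl n) r,
              ENNReal.ofReal (‖f x‖ ^ (p - n) * ‖Df x‖ ^ n)) ≤
            ENNReal.ofReal C *
              (∫⁻ x in Metric.ball (0 : Eucl n) r,
                ENNReal.ofReal (‖Df x‖ ^ n)) ^ (p / (n : ℝ)) :=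
  stmt13_general K p hK hp hpn
end
end
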